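/- arXiv:2309.10879 — 2 statements merged into one kernel-verified Lean document; each statement's English description precedes it below -/
import Mathlib

section
/- Let 𝔉₁, 𝔉₂ be filters on TP[0,1] and let f : [0,1] → ℝ be a bounded function. If S(f,Π,T) converges to I along 𝔉₁ and 𝔉₂ ρ-dominates 𝔉₁, then S(f,Π,T) converges to I along 𝔉₂. -/
/-! Writing both Riemann sums and `ρ` as sums over the union of the two tag sets gives
`|S(f,Π₁,T₁) − S(f,Π₂,T₂)| ≤ C·ρ`, so the Riemann sum is uniformly continuous for `ρ`,
and an `ε/2` argument carries a neighbourhood of `I` from `𝔉₁` to `𝔉₂`. -/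

open Filter Topology

/-- A tagged partition of the segment `[a, b]`:
points `a = ξ₀ ≤ ξ₁ ≤ ... ≤ ξₙ = b` together with tags `tₖ ∈ [ξₖ₋₁, ξₖ]`. -/
structure TaggedPartition (a b : ℝ) where
  n : ℕ
  pts : Fin (n + 1) → ℝ
  mono : Monotone pts
  first : pts 0 = a
  last : pts (Fin.last n) = b
  tag : Fin n → ℝ
  tag_ge : ∀ k : Fin n, pts k.castSucc ≤ tag k
  tag_le : ∀ k : Fin n, tag k ≤ pts k.succ

namespace TaggedPartition

variable {a b : ℝ}

/-- Length `Δₖ = ξₖ - ξₖ₋₁` of the `k`-th subinterval. -/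
def len (P : TaggedPartition a b) (k : Fin P.n) : ℝ :=
  P.pts k.succ - P.pts k.castSucc

/-- Riemann sum `S(f, Π, T) = Σₖ f(tₖ)·Δₖ`. -/
def RS (f : ℝ → ℝ) (P : TaggedPartition a b) : ℝ :=
  ∑ k, f (P.tag k) * P.len k

/-- `d(Π) < δ`: every subinterval has length `< δ`. -/
def diamLT (P : TaggedPartition a b) (δ : ℝ) : Prop :=
  ∀ k : Fin P.n, P.len k < δ

/-- `ℓ(Π, T, τ)`: total length of the subintervals whose tag is `τ`
(`0` if `τ` is not a tag). -/
noncomputable def tagLen (P : TaggedPartition a b) (τ : ℝ) : ℝ :=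
  ∑ k ∈ Finset.univ.filter (fun k => P.tag k = τ), P.len k

/-- The (finite) set of tags of a tagged partition. -/
noncomputable def tagSet (P : TaggedPartition a b) : Finset ℝ :=
  Finset.image P.tag Finset.univ

/-- The distance
`ρ((Π₁,T₁),(Π₂,T₂)) = Σ_{t∈T₁∩T₂}|Δ₁(t)−Δ₂(t)| + Σ_{t∈T₁∖T₂}Δ₁(t) + Σ_{t∈T₂∖T₁}Δ₂(t)`. -/
noncomputable def ρ (P Q : TaggedPartition a b) : ℝ :=
  ∑ τ ∈ P.tagSet ∩ Q.tagSet, |P.tagLen τ - Q.tagLen τ|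
    + ∑ τ ∈ P.tagSet \ Q.tagSet, P.tagLen τ
    + ∑ τ ∈ Q.tagSet \ P.tagSet, Q.tagLen τ

end TaggedPartition

/-- Tagged partitions of `[0,1]`. -/
abbrev TP01 := TaggedPartition 0 1

/-- The filter `𝔉_{<δ}` on `TP[0,1]` generated by the base
`P_{<δ} = {(Π,T) : d(Π) < δ}`, `δ > 0`; convergence of Riemann sums along it
is Riemann integrability. -/
noncomputable def riemannFilter : Filter TP01 :=
  ⨅ δ ∈ Set.Ioi (0 : ℝ), Filter.principal {P : TP01 | P.diamLT δ}

/-- `𝔉₂` ρ-dominates `𝔉₁`. -/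
def RhoDominates (F₂ F₁ : Filter TP01) : Prop :=
  ∀ ε > (0:ℝ), ∀ A₁ ∈ F₁, ∃ A₂ ∈ F₂, ∀ Q ∈ A₂, ∃ P ∈ A₁, TaggedPartition.ρ P Q < ε

namespace TaggedPartition

variable {a b : ℝ}

lemma len_nonneg (P : TaggedPartition a b) (k : Fin P.n) : 0 ≤ P.len k :=
  sub_nonneg.2 (P.mono (Fin.castSucc_le_succ k))

lemma tagLen_nonneg (P : TaggedPartition a b) (τ : ℝ) : 0 ≤ P.tagLen τ :=
  Finset.sum_nonneg fun k _ => P.len_nonneg k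

lemma tagLen_eq_zero_of_notMem (P : TaggedPartition a b) {τ : ℝ} (h : τ ∉ P.tagSet) :
    P.tagLen τ = 0 := by
  refine Finset.sum_eq_zero fun k hk => absurd ?_ h
  rw [← (Finset.mem_filter.1 hk).2]
  exact Finset.mem_image_of_mem P.tag (Finset.mem_univ k)

lemma tag_mem_Icc (P : TaggedPartition a b) (k : Fin P.n) : P.tag k ∈ Set.Icc a b :=
  ⟨P.first.ge.trans ((P.mono (Fin.zero_le _)).trans (P.tag_ge k)),
    (P.tag_le k).trans ((P.mono (Fin.le_last _)).trans P.last.le)⟩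

lemma mem_Icc_of_mem_tagSet (P : TaggedPartition a b) {τ : ℝ} (h : τ ∈ P.tagSet) :
    τ ∈ Set.Icc a b := by
  obtain ⟨k, -, rfl⟩ := Finset.mem_image.1 h
  exact P.tag_mem_Icc k

lemma RS_eq_sum_tagSet (f : ℝ → ℝ) (P : TaggedPartition a b) :
    P.RS f = ∑ τ ∈ P.tagSet, f τ * P.tagLen τ := by
  rw [RS, tagSet, ← Finset.sum_fiberwise_of_maps_to (g := P.tag)
    (fun k _ => Finset.mem_image_of_mem _ (Finset.mem_univ k))]
  refine Finset.sum_congr rfl fun τ _ => ?_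
  rw [tagLen, Finset.mul_sum]
  exact Finset.sum_congr rfl fun k hk => by rw [(Finset.mem_filter.1 hk).2]

lemma RS_eq_sum_of_tagSet_subset (f : ℝ → ℝ) (P : TaggedPartition a b) {s : Finset ℝ}
    (hs : P.tagSet ⊆ s) : P.RS f = ∑ τ ∈ s, f τ * P.tagLen τ := by
  rw [RS_eq_sum_tagSet]
  exact Finset.sum_subset hs fun τ _ hτ => by rw [P.tagLen_eq_zero_of_notMem hτ, mul_zero]

lemma ρ_eq_sum_union (P Q : TaggedPartition a b) :
    ρ P Q = ∑ τ ∈ P.tagSet ∪ Q.tagSet, |P.tagLen τ - Q.tagLen τ| := by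
  have hPQ : ∑ τ ∈ P.tagSet \ Q.tagSet, P.tagLen τ
      = ∑ τ ∈ P.tagSet \ Q.tagSet, |P.tagLen τ - Q.tagLen τ| :=
    Finset.sum_congr rfl fun τ hτ => by
      rw [Q.tagLen_eq_zero_of_notMem (Finset.mem_sdiff.1 hτ).2, sub_zero,
        abs_of_nonneg (P.tagLen_nonneg τ)]
  have hQP : ∑ τ ∈ Q.tagSet \ P.tagSet, Q.tagLen τ
      = ∑ τ ∈ Q.tagSet \ P.tagSet, |P.tagLen τ - Q.tagLen τ| :=
    Finset.sum_congr rfl fun τ hτ => by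
      rw [P.tagLen_eq_zero_of_notMem (Finset.mem_sdiff.1 hτ).2, zero_sub, abs_neg,
        abs_of_nonneg (Q.tagLen_nonneg τ)]
  rw [ρ, hPQ, hQP, Finset.sum_inter_add_sum_sdiff, ← Finset.union_sdiff_left, add_comm,
    Finset.sum_sdiff Finset.subset_union_left]

lemma abs_RS_sub_le (f : ℝ → ℝ) {C : ℝ} (hb : ∀ t ∈ Set.Icc a b, |f t| ≤ C)
    (P Q : TaggedPartition a b) : |P.RS f - Q.RS f| ≤ C * ρ P Q := by
  calc |P.RS f - Q.RS f| = |∑ τ ∈ P.tagSet ∪ Q.tagSet, f τ * (P.tagLen τ - Q.tagLen τ)| := by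
        rw [P.RS_eq_sum_of_tagSet_subset f Finset.subset_union_left,
          Q.RS_eq_sum_of_tagSet_subset f Finset.subset_union_right, ← Finset.sum_sub_distrib]
        simp only [mul_sub]
    _ ≤ ∑ τ ∈ P.tagSet ∪ Q.tagSet, |f τ| * |P.tagLen τ - Q.tagLen τ| := by
        simpa only [abs_mul] using Finset.abs_sum_le_sum_abs
          (fun τ => f τ * (P.tagLen τ - Q.tagLen τ)) (P.tagSet ∪ Q.tagSet)
    _ ≤ ∑ τ ∈ P.tagSet ∪ Q.tagSet, C * |P.tagLen τ - Q.tagLen τ| := by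
        refine Finset.sum_le_sum fun τ hτ => mul_le_mul_of_nonneg_right (hb τ ?_) (abs_nonneg _)
        rcases Finset.mem_union.1 hτ with h | h
        exacts [P.mem_Icc_of_mem_tagSet h, Q.mem_Icc_of_mem_tagSet h]
    _ = C * ρ P Q := by rw [← Finset.mul_sum, ρ_eq_sum_union]

end TaggedPartition

theorem Filter.Tendsto.of_forall_exists_near {α β : Type*} [PseudoMetricSpace β] {g : α → β}
    {d : α → α → ℝ} {F₁ F₂ : Filter α} {I : β}
    (hg : ∀ ε > 0, ∃ δ > 0, ∀ P Q, d P Q < δ → dist (g P) (g Q) < ε)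
    (hdom : ∀ ε > 0, ∀ A₁ ∈ F₁, ∃ A₂ ∈ F₂, ∀ Q ∈ A₂, ∃ P ∈ A₁, d P Q < ε)
    (hI : Tendsto g F₁ (𝓝 I)) : Tendsto g F₂ (𝓝 I) := by
  rw [Metric.tendsto_nhds] at hI ⊢
  intro ε hε
  obtain ⟨δ, hδ, hgδ⟩ := hg (ε / 2) (half_pos hε)
  obtain ⟨A₂, hA₂, hnear⟩ := hdom δ hδ _ (hI (ε / 2) (half_pos hε))
  filter_upwards [hA₂] with Q hQ
  obtain ⟨P, hPI, hPQ⟩ := hnear Q hQ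
  calc dist (g Q) I ≤ dist (g P) (g Q) + dist (g P) I := dist_triangle_left _ _ _
    _ < ε / 2 + ε / 2 := add_lt_add (hgδ P Q hPQ) hPI
    _ = ε := add_halves ε

/-- For a bounded `f`, convergence of Riemann sums along `𝔉₁` transfers to any
filter `𝔉₂` that ρ-dominates `𝔉₁`, with the same limit. -/
theorem tendsto_of_rho_dominates (f : ℝ → ℝ) (F₁ F₂ : Filter TP01) (C : ℝ)
    (hb : ∀ t ∈ Set.Icc (0:ℝ) 1, |f t| ≤ C) (I : ℝ)
    (hI : Filter.Tendsto (fun P : TP01 => TaggedPartition.RS f P) F₁ (nhds I))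
    (hdom : RhoDominates F₂ F₁) :
    Filter.Tendsto (fun P : TP01 => TaggedPartition.RS f P) F₂ (nhds I) := by
  have hC : 0 ≤ C := (abs_nonneg _).trans (hb 0 (by norm_num))
  refine hI.of_forall_exists_near (fun ε hε => ⟨ε / (C + 1), by positivity, fun P Q hPQ => ?_⟩) hdom
  calc dist (P.RS f) (Q.RS f) ≤ C * TaggedPartition.ρ P Q := TaggedPartition.abs_RS_sub_le f hb P Q
    _ ≤ C * (ε / (C + 1)) := mul_le_mul_of_nonneg_left hPQ.le hC
    _ < ε := by
        rw [mul_div_assoc', div_lt_iff₀ (by positivity)]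
        nlinarith
end

section
/- If a filter 𝔉 on TP[0,1] is exactly tagged, then there exists an unbounded function f : [0,1] → ℝ that is 𝔉-integrable. -/
/- The function `f` with `f (aₙ) = n` and `f = 0` off the sequence is unbounded on `[0,1]`, yet every
tagged partition in a member of the exactly tagged base avoids the sequence `a`, so its Riemann sum
is `0`; hence the Riemann sums converge to `0`. -/

open Filter Topology

/-- A filter `𝔉` on `TP[0,1]` is exactly tagged if it has a base `𝔅` and there is a
strictly decreasing sequence `A ⊂ [0,1]` such that every tagged partition in every
member of `𝔅` has tags disjoint from `A`. -/
def ExactlyTagged (F : Filter TP01) : Prop :=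
  ∃ (B : FilterBasis TP01) (a : ℕ → ℝ), B.filter = F ∧ StrictAnti a ∧
    (∀ n, a n ∈ Set.Icc (0:ℝ) 1) ∧
    ∀ S ∈ B.sets, ∀ P ∈ S, ∀ k : Fin P.n, ∀ n : ℕ, P.tag k ≠ a n

namespace TaggedPartition

variable {a b : ℝ}

theorem RS_eq_zero_of_forall_tag {f : ℝ → ℝ} {P : TaggedPartition a b}
    (hP : ∀ k, f (P.tag k) = 0) : RS f P = 0 :=
  Finset.sum_eq_zero fun k _ => by rw [hP k, zero_mul]

theorem tendsto_RS_zero_of_eventually_tag {f : ℝ → ℝ} {F : Filter (TaggedPartition a b)}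
    (hF : ∀ᶠ P in F, ∀ k, f (P.tag k) = 0) : Tendsto (RS f) F (𝓝 0) :=
  tendsto_const_nhds.congr' (hF.mono fun _ hP => (RS_eq_zero_of_forall_tag hP).symm)

end TaggedPartition

theorem ExactlyTagged.exists_eventually_tag_ne {F : Filter TP01} (h : ExactlyTagged F) :
    ∃ a : ℕ → ℝ, StrictAnti a ∧ (∀ n, a n ∈ Set.Icc (0 : ℝ) 1) ∧
      ∀ᶠ P in F, ∀ k : Fin P.n, ∀ n, P.tag k ≠ a n := by
  obtain ⟨B, a, rfl, hanti, hmem, htags⟩ := h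
  obtain ⟨S, hS⟩ := B.nonempty
  exact ⟨a, hanti, hmem, mem_of_superset (B.mem_filter_of_mem hS) (htags S hS)⟩

theorem Function.Injective.exists_lt_abs_extend_natCast {α : Type*} {a : ℕ → α}
    (ha : a.Injective) (C : ℝ) :
    ∃ n, C < |Function.extend a (fun n : ℕ => (n : ℝ)) 0 (a n)| := by
  obtain ⟨n, hn⟩ := exists_nat_gt C
  exact ⟨n, by rwa [ha.extend_apply, Nat.abs_cast]⟩

/-- If `𝔉` is exactly tagged, then some unbounded function is `𝔉`-integrable. -/
theorem exactly_tagged_integrates_unbounded (F : Filter TP01)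
    (h : ExactlyTagged F) :
    ∃ f : ℝ → ℝ, (∀ C : ℝ, ∃ t ∈ Set.Icc (0:ℝ) 1, C < |f t|) ∧
      ∃ I : ℝ, Filter.Tendsto (fun P : TP01 => TaggedPartition.RS f P) F (nhds I) := by
  obtain ⟨a, hanti, hmem, htags⟩ := h.exists_eventually_tag_ne
  refine ⟨Function.extend a (fun n : ℕ => (n : ℝ)) 0, fun C => ?_, 0, ?_⟩
  · obtain ⟨n, hn⟩ := hanti.injective.exists_lt_abs_extend_natCast C
    exact ⟨a n, hmem n, hn⟩
  · exact TaggedPartition.tendsto_RS_zero_of_eventually_tag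
      (htags.mono fun P hP k => Function.extend_apply' _ _ _ fun ⟨n, hn⟩ => hP k n hn.symm)
end
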